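/- arXiv:1610.01331 — 2 statements merged into one kernel-verified Lean document; each statement's English description precedes it below -/
import Mathlib

section
/- The set of lengths {|s| : a·b·s = s·b·a} equals {2n+1 : n ∈ ℕ}, the set of odd natural numbers; in particular it is (0,2)-ultimately periodic. -/
private def wit {α : Type*} (a b : α) : ℕ → List α
  | 0 => [a]
  | m + 1 => a :: b :: wit a b m

private lemma wit_len {α : Type*} (a b : α) : ∀ m, (wit a b m).length = 2 * m + 1
  | 0 => rfl
  | m + 1 => by simp [wit, wit_len a b m]; ring

private lemma wit_eq {α : Type*} (a b : α) : ∀ m, [a, b] ++ wit a b m = wit a b m ++ [b, a]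
  | 0 => rfl
  | m + 1 => by
    have h := wit_eq a b m
    simp [wit] at h ⊢
    exact h

private lemma key {α : Type*} (a b : α) (hab : a ≠ b) :
    ∀ s : List α, a :: b :: s = s ++ [b, a] → ∃ m, s.length = 2 * m + 1
  | [], h => by simp at h; exact absurd h.1 hab
  | [x], _ => ⟨0, rfl⟩
  | x :: y :: t, h => by
    simp at h
    obtain ⟨hx, hy, ht⟩ := h
    subst hx; subst hy
    obtain ⟨m, hm⟩ := key a b hab t ht
    exact ⟨m + 1, by simp [hm]; ring⟩

theorem example_length_set {α : Type*} (a b : α) (hab : a ≠ b) :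
    {n : ℕ | ∃ s : List α, [a, b] ++ s = s ++ [b, a] ∧ s.length = n} =
      {n : ℕ | ∃ m : ℕ, n = 2 * m + 1} ∧
    (∀ n : ℕ,
      (n ∈ {n : ℕ | ∃ s : List α, [a, b] ++ s = s ++ [b, a] ∧ s.length = n} ↔
       n + 2 ∈ {n : ℕ | ∃ s : List α, [a, b] ++ s = s ++ [b, a] ∧ s.length = n})) := by
  have hset : {n : ℕ | ∃ s : List α, [a, b] ++ s = s ++ [b, a] ∧ s.length = n} =
      {n : ℕ | ∃ m : ℕ, n = 2 * m + 1} := by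
    ext n
    constructor
    · rintro ⟨s, hs, rfl⟩
      exact key a b hab s hs
    · rintro ⟨m, rfl⟩
      exact ⟨wit a b m, wit_eq a b m, wit_len a b m⟩
  refine ⟨hset, fun n => ?_⟩
  rw [hset]
  constructor
  · rintro ⟨m, rfl⟩; exact ⟨m + 1, by ring⟩
  · rintro ⟨m, hm⟩
    cases m with
    | zero => omega
    | succ k => exact ⟨k, by omega⟩
end

section
/- For a linear word equation (no variable occurs more than once on either side, and in total at most once in the whole equation) of size N, any derivation using the unfolding rules ⟨1SEA-CONST-SUCC⟩, ⟨1SEA-SMALL-*⟩ (substituting a variable by ε or by c·u₁) and ⟨1SEA-BIG⟩-case-(i) strictly decreases the equation size; hence every derivation path has length at most N. -/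
/-!
In a linear equation the variable eliminated by a step occurs nowhere else, so every
substitution performed by the step is the identity on the rest of the equation. Each rule then
just deletes leading symbols (the c·u₁ rule trades the variable for a fresh u₁ and drops the
matched letter c), so the size drops by at least one and linearity is kept; a derivation from
an equation of size N therefore has at most N steps.
-/

/-- Symbols of word-equation terms: variables (inl) or letters (inr). -/
abbrev WSym (V C : Type*) := V ⊕ C

def subst {V C : Type*} [DecidableEq V] (v : V) (t : List (WSym V C)) :
    List (WSym V C) → List (WSym V C) :=
  fun w => w.flatMap fun s =>
    match s with
    | Sum.inl x => if x = v then t else [Sum.inl x]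
    | Sum.inr c => [Sum.inr c]

def eqSize {V C : Type*} (e : List (WSym V C) × List (WSym V C)) : ℕ :=
  e.1.length + e.2.length

def Linear {V C : Type*} [DecidableEq V] [DecidableEq C]
    (e : List (WSym V C) × List (WSym V C)) : Prop :=
  ∀ v : V, (e.1 ++ e.2).count (Sum.inl v) ≤ 1

/-- The unfolding rules ⟨1SEA-CONST-SUCC⟩, ⟨1SEA-SMALL-*⟩ (substituting the leading
variable by ε, or by c·u₁ followed by matching c) and case (i) of ⟨1SEA-BIG⟩
(identifying two leading variables and cancelling them). -/
inductive Step {V C : Type*} [DecidableEq V] :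
    List (WSym V C) × List (WSym V C) → List (WSym V C) × List (WSym V C) → Prop
  | constSucc (c : C) (l r : List (WSym V C)) :
      Step (Sum.inr c :: l, Sum.inr c :: r) (l, r)
  | smallLEps (v : V) (c : C) (l r : List (WSym V C)) :
      Step (Sum.inl v :: l, Sum.inr c :: r)
           (subst v [] l, Sum.inr c :: subst v [] r)
  | smallREps (v : V) (c : C) (l r : List (WSym V C)) :
      Step (Sum.inr c :: l, Sum.inl v :: r)
           (Sum.inr c :: subst v [] l, subst v [] r)
  | smallLCons (v v₁ : V) (c : C) (l r : List (WSym V C))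
      (hfresh : Sum.inl v₁ ∉ l ++ r) :
      Step (Sum.inl v :: l, Sum.inr c :: r)
           (Sum.inl v₁ :: subst v [Sum.inr c, Sum.inl v₁] l,
            subst v [Sum.inr c, Sum.inl v₁] r)
  | smallRCons (v v₁ : V) (c : C) (l r : List (WSym V C))
      (hfresh : Sum.inl v₁ ∉ l ++ r) :
      Step (Sum.inr c :: l, Sum.inl v :: r)
           (subst v [Sum.inr c, Sum.inl v₁] l,
            Sum.inl v₁ :: subst v [Sum.inr c, Sum.inl v₁] r)
  | bigEq (v₁ v₂ : V) (l r : List (WSym V C)) :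
      Step (Sum.inl v₁ :: l, Sum.inl v₂ :: r)
           (subst v₂ [Sum.inl v₁] l, subst v₂ [Sum.inl v₁] r)

-- `List.count` on `WSym V C` uses the derived `BEq` of `Sum`, which core does not show lawful.
instance Sum.instLawfulBEq {α β : Type*} [BEq α] [LawfulBEq α] [BEq β] [LawfulBEq β] :
    LawfulBEq (α ⊕ β) where
  eq_of_beq {a b} h := by
    cases a <;> cases b <;> simp_all [BEq.beq, Sum.instBEq.beq]
  rfl {a} := by
    cases a with
    | inl a => exact (beq_self_eq_true a :)
    | inr b => exact (beq_self_eq_true b :)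

theorem chain_length_le_of_measure_lt {α : Type*} {R : α → α → Prop} {P : α → Prop}
    (μ : α → ℕ) (hR : ∀ a b, P a → R a b → μ b < μ a ∧ P b) {f : ℕ → α} {n : ℕ}
    (h₀ : P (f 0)) (hf : ∀ i < n, R (f i) (f (i + 1))) : n ≤ μ (f 0) := by
  have hinv : ∀ i ≤ n, P (f i) ∧ μ (f i) + i ≤ μ (f 0) := by
    intro i hi
    induction i with
    | zero => exact ⟨h₀, le_rfl⟩
    | succ k ih =>
      obtain ⟨hPk, hμk⟩ := ih (by omega)
      obtain ⟨hlt, hPk'⟩ := hR _ _ hPk (hf k (by omega))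
      exact ⟨hPk', by omega⟩
  have := (hinv n le_rfl).2
  omega

section

variable {V C : Type*} [DecidableEq V]

theorem subst_eq_self {v : V} (t : List (WSym V C)) {w : List (WSym V C)}
    (h : Sum.inl v ∉ w) : subst v t w = w := by
  conv_rhs => rw [← List.flatMap_singleton' w]
  refine List.flatMap_congr fun s hs => ?_
  rcases s with x | c
  · have : x ≠ v := by rintro rfl; exact h hs
    simp [this]
  · rfl

variable [DecidableEq C] {e e' : List (WSym V C) × List (WSym V C)}

theorem Linear.of_sublist (he : Linear e) (h : (e'.1 ++ e'.2).Sublist (e.1 ++ e.2)) :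
    Linear e' :=
  fun x => (h.count_le _).trans (he x)

theorem Linear.not_mem_of_perm {v : V} {w : List (WSym V C)} (he : Linear e)
    (h : (e.1 ++ e.2).Perm (Sum.inl v :: w)) : Sum.inl v ∉ w := by
  have hv := he v
  rw [h.count_eq, List.count_cons_self] at hv
  exact List.count_eq_zero.mp (by omega)

theorem Linear.of_perm_cons_fresh {v : V} (he : Linear e) (hfresh : Sum.inl v ∉ e.1 ++ e.2)
    (h : (e'.1 ++ e'.2).Perm (Sum.inl v :: (e.1 ++ e.2))) : Linear e' := by
  intro x
  rw [h.count_eq]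
  by_cases hx : x = v
  · subst hx
    rw [List.count_cons_self, List.count_eq_zero.mpr hfresh]
  · rw [List.count_cons_of_ne (by simpa using Ne.symm hx)]
    exact he x

theorem Linear.subst_eq_self_of_perm {v : V} {w : List (WSym V C)} (he : Linear e)
    (h : (e.1 ++ e.2).Perm (Sum.inl v :: w)) (t : List (WSym V C)) {u : List (WSym V C)}
    (hu : u ⊆ w) : subst v t u = u :=
  subst_eq_self t fun hv => he.not_mem_of_perm h (hu hv)

theorem Linear.step (he : Linear e) (hs : Step e e') : eqSize e' < eqSize e ∧ Linear e' := by
  have hdrop : ∀ {a b : WSym V C} {l r : List (WSym V C)},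
      (l ++ r).Sublist ((a :: l) ++ (b :: r)) := fun {_ _ _ _} =>
    (List.sublist_cons_self _ _).append (List.sublist_cons_self _ _)
  cases hs with
  | constSucc c l r =>
    exact ⟨by simp only [eqSize, List.length_cons]; omega, he.of_sublist hdrop⟩
  | smallLEps v c l r =>
    rw [he.subst_eq_self_of_perm .rfl [] (u := l) (by simp),
      he.subst_eq_self_of_perm .rfl [] (u := r) (by simp)]
    exact ⟨by simp only [eqSize, List.length_cons]; omega,
      he.of_sublist ((List.sublist_cons_self _ _).append (.refl _))⟩
  | smallREps v c l r =>
    rw [he.subst_eq_self_of_perm List.perm_middle [] (u := l) (by simp),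
      he.subst_eq_self_of_perm List.perm_middle [] (u := r) (by simp)]
    exact ⟨by simp only [eqSize, List.length_cons]; omega,
      he.of_sublist ((List.Sublist.refl _).append (List.sublist_cons_self _ _))⟩
  | smallLCons v v₁ c l r hfresh =>
    rw [he.subst_eq_self_of_perm .rfl _ (u := l) (by simp),
      he.subst_eq_self_of_perm .rfl _ (u := r) (by simp)]
    exact ⟨by simp only [eqSize, List.length_cons]; omega,
      (he.of_sublist (e' := (l, r)) hdrop).of_perm_cons_fresh hfresh .rfl⟩
  | smallRCons v v₁ c l r hfresh =>
    rw [he.subst_eq_self_of_perm List.perm_middle _ (u := l) (by simp),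
      he.subst_eq_self_of_perm List.perm_middle _ (u := r) (by simp)]
    exact ⟨by simp only [eqSize, List.length_cons]; omega,
      (he.of_sublist (e' := (l, r)) hdrop).of_perm_cons_fresh hfresh List.perm_middle⟩
  | bigEq v₁ v₂ l r =>
    rw [he.subst_eq_self_of_perm List.perm_middle _ (u := l) (by simp),
      he.subst_eq_self_of_perm List.perm_middle _ (u := r) (by simp)]
    exact ⟨by simp only [eqSize, List.length_cons]; omega, he.of_sublist hdrop⟩

end

theorem linear_derivation_bound {V C : Type*} [DecidableEq V] [DecidableEq C] (N : ℕ) :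
    (∀ e e' : List (WSym V C) × List (WSym V C),
        Linear e → Step e e' → eqSize e' < eqSize e ∧ Linear e') ∧
    (∀ (f : ℕ → List (WSym V C) × List (WSym V C)) (n : ℕ),
        Linear (f 0) → eqSize (f 0) = N →
        (∀ i < n, Step (f i) (f (i + 1))) → n ≤ N) :=
  ⟨fun _ _ he hs => he.step hs, fun _ _ h₀ hN hf =>
    hN ▸ chain_length_le_of_measure_lt eqSize (fun _ _ => Linear.step) h₀ hf⟩
end
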